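/- arXiv:2506.06075 — 2 statements merged into one kernel-verified Lean document; each statement's English description precedes it below -/
import Mathlib

section
/- Suppose Q₁₁, Q₂₂ > 0 and Q₁₂² < Q₁₁Q₂₂ with Q₁₂²/(Q₁₁Q₂₂) > 2√2 − 2. Then at γ = 1/√2, the average of the two stepwise bounds μ'(γ) = Q₂₂/(γΔ) + 1/((1−γ)Q₂₂) and μ''(γ) = Q₁₁/(γΔ) + 1/((1−γ)Q₁₁), where Δ = Q₁₁Q₂₂ − Q₁₂², satisfies (μ'(γ)+μ''(γ))/2 < (Q₁₁+Q₂₂)/Δ; hence min(μ'(γ), μ''(γ)) < Tr[Q⁻¹]. -/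
/-!
Writing `P = Q₁₁Q₂₂`, the two stepwise bounds add up to `Tr Q · (1/(γΔ) + 1/((1-γ)P))`, so for
`0 < γ < 1` their average beats `Tr Q⁻¹ = Tr Q / Δ` exactly when `Q₁₂²/P > 2γ + 1/γ - 2`. By AM-GM
this threshold is smallest at `γ = 1/√2`, where it equals `2√2 - 2`.
-/

/-- `μ'(γ) = stepwiseBound Δ γ Q₂₂` and `μ''(γ) = stepwiseBound Δ γ Q₁₁`, where `Δ = det Q`. -/
noncomputable def stepwiseBound (Δ γ q : ℝ) : ℝ :=
  q / (γ * Δ) + 1 / ((1 - γ) * q)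

lemma stepwiseBound_add_stepwiseBound {a b : ℝ} (ha : a ≠ 0) (hb : b ≠ 0) (Δ γ : ℝ) :
    stepwiseBound Δ γ b + stepwiseBound Δ γ a
      = (a + b) * (1 / (γ * Δ) + 1 / ((1 - γ) * (a * b))) := by
  simp only [stepwiseBound, mul_inv, div_eq_mul_inv]
  field_simp
  ring

lemma stepwiseBound_add_stepwiseBound_div_two_lt {a b c γ : ℝ} (ha : 0 < a) (hb : 0 < b)
    (hdet : c ^ 2 < a * b) (hγ₀ : 0 < γ)
    (hc : 2 * γ + 1 / γ - 2 < c ^ 2 / (a * b)) :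
    (stepwiseBound (a * b - c ^ 2) γ b + stepwiseBound (a * b - c ^ 2) γ a) / 2
      < (a + b) / (a * b - c ^ 2) := by
  set Δ := a * b - c ^ 2 with hΔ_def
  have hP : 0 < a * b := mul_pos ha hb
  have hΔ : 0 < Δ := sub_pos.mpr hdet
  have hc' : (2 * γ ^ 2 + 1 - 2 * γ) * (a * b) < γ * c ^ 2 :=
    calc (2 * γ ^ 2 + 1 - 2 * γ) * (a * b) = γ * ((2 * γ + 1 / γ - 2) * (a * b)) := by
          field_simp
      _ < γ * c ^ 2 := mul_lt_mul_of_pos_left ((lt_div_iff₀ hP).mp hc) hγ₀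
  have hγ₁ : γ < 1 := by
    have hquad : (2 * γ ^ 2 - 3 * γ + 1) * (a * b) < 0 := by
      nlinarith [mul_lt_mul_of_pos_left hdet hγ₀]
    nlinarith [neg_of_mul_neg_left hquad hP.le]
  have hhalf : (1 / (γ * Δ) + 1 / ((1 - γ) * (a * b))) / 2 < 1 / Δ := by
    rw [div_add_div _ _ (by positivity) (by positivity), div_div,
      div_lt_div_iff₀ (by positivity) hΔ, hΔ_def]
    nlinarith
  calc (stepwiseBound Δ γ b + stepwiseBound Δ γ a) / 2
      = (a + b) * ((1 / (γ * Δ) + 1 / ((1 - γ) * (a * b))) / 2) := by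
        rw [stepwiseBound_add_stepwiseBound ha.ne' hb.ne', mul_div_assoc]
    _ < (a + b) * (1 / Δ) := by gcongr
    _ = (a + b) / Δ := mul_one_div _ _

lemma two_mul_add_inv_sub_two_at_inv_sqrt_two :
    2 * (1 / √2) + 1 / (1 / √2) - 2 = 2 * √2 - 2 := by
  field_simp
  linear_combination -Real.sq_sqrt zero_le_two

theorem stepwise_average_beats_joint_at_inv_sqrt_two
    (Q11 Q22 Q12 : ℝ) (h11 : 0 < Q11) (h22 : 0 < Q22)
    (hdet : Q12 ^ 2 < Q11 * Q22)
    (hcond : Q12 ^ 2 / (Q11 * Q22) > 2 * Real.sqrt 2 - 2) :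
    let Δ := Q11 * Q22 - Q12 ^ 2
    let γ := 1 / Real.sqrt 2
    let μ' := Q22 / (γ * Δ) + 1 / ((1 - γ) * Q22)
    let μ'' := Q11 / (γ * Δ) + 1 / ((1 - γ) * Q11)
    (μ' + μ'') / 2 < (Q11 + Q22) / Δ ∧ min μ' μ'' < (Q11 + Q22) / Δ := by
  intro Δ γ μ' μ''
  have havg : (μ' + μ'') / 2 < (Q11 + Q22) / Δ :=
    stepwiseBound_add_stepwiseBound_div_two_lt h11 h22 hdet (by positivity)
      (two_mul_add_inv_sub_two_at_inv_sqrt_two ▸ hcond)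
  refine ⟨havg, lt_of_le_of_lt ?_ havg⟩
  linarith [min_le_left μ' μ'', min_le_right μ' μ'']
end

section
/- Let Q₁₁, Q₂₂ > 0, Δ = Q₁₁Q₂₂ − Q₁₂² > 0 and assume Q₁₂²/(Q₁₁Q₂₂) > 2√2 − 2. Then min over γ ∈ (0,1) of min(μ'(γ), μ''(γ)) < (Q₁₁+Q₂₂)/Δ, where μ'(γ) = Q₂₂/(γΔ) + 1/((1−γ)Q₂₂) and μ''(γ) = Q₁₁/(γΔ) + 1/((1−γ)Q₁₁). -/
/-!
The minimum over `γ` of `u²/γ + v²/(1-γ)` is `(u + v)²`. So if `b ≤ a` are the diagonal entries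
of `Q`, the best stepwise bound estimating the parameter with the smaller entry first is
`b/Δ + 2/√Δ + 1/b`, which beats `(a + b)/Δ` exactly when `2b√Δ < Q₁₂² = ab - Δ`. Since `b² ≤ Q₁₁Q₂₂ = s`,
this follows from `4sΔ < Q₁₂⁴`, which with `x = Q₁₂²/s` reads `(x + 2)² > 8`, i.e. `x > 2√2 - 2`.
-/

open Real

/-- The minimizer is `γ = u / (u + v)`. -/
lemma exists_sq_div_add_sq_div_one_sub_eq {u v : ℝ} (hu : 0 < u) (hv : 0 < v) :
    ∃ γ : ℝ, 0 < γ ∧ γ < 1 ∧ u ^ 2 / γ + v ^ 2 / (1 - γ) = (u + v) ^ 2 := by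
  have huv : 0 < u + v := by positivity
  refine ⟨u / (u + v), by positivity, (div_lt_one huv).2 (by linarith), ?_⟩
  have h1 : 1 - u / (u + v) = v / (u + v) := by field_simp; ring
  rw [h1]
  field_simp

lemma exists_stepwise_lt_joint {a b Δ : ℝ} (hb : 0 < b) (hΔ : 0 < Δ)
    (h : 2 * b * √Δ < a * b - Δ) :
    ∃ γ : ℝ, 0 < γ ∧ γ < 1 ∧ b / (γ * Δ) + 1 / ((1 - γ) * b) < (a + b) / Δ := by
  have ht : 0 < √Δ := sqrt_pos.2 hΔ
  have hr : 0 < √b := sqrt_pos.2 hb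
  obtain ⟨γ, hγ0, hγ1, hγ⟩ := exists_sq_div_add_sq_div_one_sub_eq (div_pos hr ht) (one_div_pos.2 hr)
  refine ⟨γ, hγ0, hγ1, ?_⟩
  have hΔsq : √Δ ^ 2 = Δ := sq_sqrt hΔ.le
  have hbsq : √b ^ 2 = b := sq_sqrt hb.le
  calc b / (γ * Δ) + 1 / ((1 - γ) * b)
      = (√b / √Δ) ^ 2 / γ + (1 / √b) ^ 2 / (1 - γ) := by
        rw [div_pow, div_pow, hΔsq, hbsq]; field_simp
    _ = b / Δ + 2 / √Δ + 1 / b := by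
        rw [hγ, add_sq, div_pow, div_pow, hΔsq, hbsq]; field_simp
    _ < (a + b) / Δ := by
        have hgap : (a + b) / Δ - (b / Δ + 2 / √Δ + 1 / b) =
            (a * b - Δ - 2 * b * √Δ) / (Δ * b) := by
          generalize √Δ = t at hΔsq ht ⊢
          subst hΔsq
          field_simp
          ring
        exact sub_pos.1 (hgap ▸ div_pos (by linarith) (by positivity))

lemma four_mul_mul_sub_lt_sq_of_div_gt {s q : ℝ} (hs : 0 < s) (h : q / s > 2 * √2 - 2) :
    4 * s * (s - q) < q ^ 2 := by
  have hx : 2 * √2 < q / s + 2 := by linarith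
  have h8 : 8 < (q / s + 2) ^ 2 := by
    calc (8 : ℝ) = (2 * √2) ^ 2 := by rw [mul_pow, sq_sqrt zero_le_two]; norm_num
      _ < (q / s + 2) ^ 2 := pow_lt_pow_left₀ hx (by positivity) two_ne_zero
  have hq : q = q / s * s := (div_mul_cancel₀ q hs.ne').symm
  rw [hq]
  nlinarith [mul_pos hs hs]

lemma two_mul_mul_sqrt_lt {b s Δ q : ℝ} (hbs : b ^ 2 ≤ s) (hΔ : 0 ≤ Δ)
    (hq : 0 ≤ q) (h : 4 * s * Δ < q ^ 2) : 2 * b * √Δ < q := by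
  refine lt_of_pow_lt_pow_left₀ 2 hq ?_
  calc (2 * b * √Δ) ^ 2 = 4 * b ^ 2 * Δ := by rw [mul_pow, mul_pow, sq_sqrt hΔ]; ring
    _ ≤ 4 * s * Δ := by gcongr
    _ < q ^ 2 := h

theorem stepwise_beats_joint_main
    (Q11 Q22 Q12 : ℝ) (h11 : 0 < Q11) (h22 : 0 < Q22)
    (hΔ : 0 < Q11 * Q22 - Q12 ^ 2)
    (hcond : Q12 ^ 2 / (Q11 * Q22) > 2 * Real.sqrt 2 - 2) :
    let Δ := Q11 * Q22 - Q12 ^ 2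
    let μ' : ℝ → ℝ := fun γ => Q22 / (γ * Δ) + 1 / ((1 - γ) * Q22)
    let μ'' : ℝ → ℝ := fun γ => Q11 / (γ * Δ) + 1 / ((1 - γ) * Q11)
    ∃ γ : ℝ, 0 < γ ∧ γ < 1 ∧ min (μ' γ) (μ'' γ) < (Q11 + Q22) / Δ := by
  intro Δ μ' μ''
  have hq : 4 * (Q11 * Q22) * Δ < (Q12 ^ 2) ^ 2 :=
    four_mul_mul_sub_lt_sq_of_div_gt (mul_pos h11 h22) hcond
  rcases le_total Q22 Q11 with h | h
  · have hsqrt := two_mul_mul_sqrt_lt (b := Q22) (by nlinarith) hΔ.le (sq_nonneg Q12) hq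
    obtain ⟨γ, hγ0, hγ1, hγ⟩ := exists_stepwise_lt_joint (a := Q11) h22 hΔ (by linarith)
    exact ⟨γ, hγ0, hγ1, (min_le_left _ _).trans_lt hγ⟩
  · have hsqrt := two_mul_mul_sqrt_lt (b := Q11) (by nlinarith) hΔ.le (sq_nonneg Q12) hq
    obtain ⟨γ, hγ0, hγ1, hγ⟩ := exists_stepwise_lt_joint (a := Q22) h11 hΔ (by linarith)
    rw [add_comm Q22] at hγ
    exact ⟨γ, hγ0, hγ1, (min_le_right _ _).trans_lt hγ⟩
end
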